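/- (Telescoping pointwise estimate.) Let n ≥ 1, p ≥ 1, C₀ > 0, let Ω ⊂ ℝⁿ be open, let f ∈ L¹_loc(Ω) and let g : Ω → [0,∞] be measurable. Suppose that for every ball B = B(z,ρ) with B ⊂ Ω one has ⨍_B |f − f_B| dx ≤ C₀ ρ ( ⨍_B g dx )^{1/p}, where f_B = ⨍_B f dx. Then there exists C = C(n,p,C₀) > 0 such that for all Lebesgue points x, y of f with B(x, 2|x−y|) ⊂ Ω and B(y, 2|x−y|) ⊂ Ω, |f(x) − f(y)| ≤ C |x−y| ( (M_{2|x−y|} g(x))^{1/p} + (M_{2|x−y|} g(y))^{1/p} ). -/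

import Mathlib

open MeasureTheory Metric Filter Set
open scoped ENNReal NNReal Topology

noncomputable section

/-- The restricted Hardy–Littlewood maximal function of `g` relative to `Ω`:
`M_R g(x) = sup { ⨍_{B(x,r)} g : 0 < r < R, B(x,r) ⊆ Ω }`. -/
def restMaximal {n : ℕ} (Ω : Set (EuclideanSpace ℝ (Fin n)))
    (g : EuclideanSpace ℝ (Fin n) → ℝ≥0∞) (R : ℝ)
    (x : EuclideanSpace ℝ (Fin n)) : ℝ≥0∞ :=
  ⨆ (r : ℝ) (_ : 0 < r) (_ : r < R) (_ : ball x r ⊆ Ω), ⨍⁻ y in ball x r, g y ∂volume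

/-- `x` is a Lebesgue point of `f`: `⨍_{B(x,r)} |f - f(x)| → 0` as `r → 0⁺`. -/
def IsLebesguePoint {n : ℕ} (f : EuclideanSpace ℝ (Fin n) → ℝ)
    (x : EuclideanSpace ℝ (Fin n)) : Prop :=
  Filter.Tendsto (fun r : ℝ => ⨍ y in ball x r, |f y - f x|)
    (nhdsWithin 0 (Set.Ioi 0)) (nhds 0)


/-!
At a Lebesgue point `x`, the averages of `f` over the balls `B(x, 2⁻ⁱρ)` converge to `f x`, and
two consecutive ones differ by at most `2ⁿ` times the mean oscillation of `f` on the larger ball,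
which the Poincaré inequality bounds by `C₀ 2⁻ⁱρ (M g x)^{1/p}`. Summing the geometric series gives
`|f x - f_{B(x,ρ)}| ≤ 2ⁿ⁺¹ C₀ ρ (M g x)^{1/p}`. This is applied at `x` with `ρ = |x-y|/2` and at
`y` with `ρ = 3|x-y|/2`; the two averages are compared through `B(x,|x-y|/2) ⊆ B(y,3|x-y|/2)`,
at the cost of the volume ratio `3ⁿ`. All radii stay below `2|x-y|`, the range seen by
`M_{2|x-y|}`.
-/

def meanOscillation {α : Type*} [MeasurableSpace α] (f : α → ℝ) (s : Set α)
    (μ : Measure α := by volume_tac) : ℝ :=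
  ⨍ x in s, |f x - ⨍ y in s, f y ∂μ| ∂μ

section Averages

variable {α : Type*} [MeasurableSpace α] {μ : Measure α} {s t : Set α} {f : α → ℝ}

theorem abs_setAverage_sub_le (hs₀ : μ s ≠ 0) (hs : μ s ≠ ∞) (hf : IntegrableOn f s μ) (c : ℝ) :
    |(⨍ x in s, f x ∂μ) - c| ≤ ⨍ x in s, |f x - c| ∂μ := by
  have hμs : μ.real s ≠ 0 := (ENNReal.toReal_pos hs₀ hs).ne'
  have hsub : (⨍ x in s, f x ∂μ) - c = ⨍ x in s, (f x - c) ∂μ := by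
    rw [setAverage_eq, setAverage_eq, integral_sub hf (integrableOn_const hs), smul_sub,
      setIntegral_const, smul_smul, inv_mul_cancel₀ hμs, one_smul]
  rw [hsub, setAverage_eq, setAverage_eq, smul_eq_mul, smul_eq_mul, abs_mul,
    abs_of_nonneg (by positivity)]
  exact mul_le_mul_of_nonneg_left abs_integral_le_integral_abs (by positivity)

theorem setAverage_le_div_mul_setAverage {g : α → ℝ} (hst : s ⊆ t) (ht : μ t ≠ ∞)
    (hg : IntegrableOn g t μ) (hg₀ : 0 ≤ g) :
    ⨍ x in s, g x ∂μ ≤ μ.real t / μ.real s * ⨍ x in t, g x ∂μ := by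
  rcases (measureReal_nonneg : 0 ≤ μ.real s).eq_or_lt with hs | hs
  · simp [setAverage_eq, ← hs]
  have ht₀ : 0 < μ.real t := hs.trans_le (measureReal_mono hst ht)
  rw [setAverage_eq, setAverage_eq, smul_eq_mul, smul_eq_mul]
  calc (μ.real s)⁻¹ * ∫ x in s, g x ∂μ ≤ (μ.real s)⁻¹ * ∫ x in t, g x ∂μ :=
        mul_le_mul_of_nonneg_left
          (setIntegral_mono_set hg (Eventually.of_forall hg₀) hst.eventuallyLE) (by positivity)
    _ = μ.real t / μ.real s * ((μ.real t)⁻¹ * ∫ x in t, g x ∂μ) := by field_simp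

theorem abs_setAverage_sub_setAverage_le (hst : s ⊆ t) (hs₀ : μ s ≠ 0) (ht : μ t ≠ ∞)
    (hf : IntegrableOn f t μ) :
    |(⨍ x in s, f x ∂μ) - ⨍ x in t, f x ∂μ| ≤ μ.real t / μ.real s * meanOscillation f t μ :=
  (abs_setAverage_sub_le hs₀ ((measure_mono hst).trans_lt ht.lt_top).ne (hf.mono_set hst) _).trans
    (setAverage_le_div_mul_setAverage hst ht (hf.sub (integrableOn_const ht)).abs
      fun _ => abs_nonneg _)

end Averages

section AddHaar

variable {E : Type*} [NormedAddCommGroup E] [NormedSpace ℝ E] [MeasurableSpace E] [BorelSpace E]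
  [FiniteDimensional ℝ E] (μ : Measure E) [μ.IsAddHaarMeasure]

theorem measureReal_ball_mul_div (x z : E) {c ρ : ℝ} (hc : 0 < c) (hρ : 0 < ρ) :
    μ.real (ball z (c * ρ)) / μ.real (ball x ρ) = c ^ Module.finrank ℝ E := by
  have hpos : 0 < μ.real (ball (0 : E) ρ) :=
    ENNReal.toReal_pos (measure_ball_pos μ 0 hρ).ne' measure_ball_lt_top.ne
  rw [measureReal_def, Measure.addHaar_ball_mul_of_pos μ z hc, ENNReal.toReal_mul,
    ENNReal.toReal_ofReal (by positivity), ← measureReal_def, Measure.addHaar_real_ball_center μ x]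
  field_simp

theorem abs_setAverage_ball_sub_le {f : E → ℝ} {x z : E} {c ρ : ℝ} (hc : 0 < c) (hρ : 0 < ρ)
    (hsub : ball x ρ ⊆ ball z (c * ρ)) (hf : IntegrableOn f (ball z (c * ρ)) μ) :
    |(⨍ y in ball x ρ, f y ∂μ) - ⨍ y in ball z (c * ρ), f y ∂μ| ≤
      c ^ Module.finrank ℝ E * meanOscillation f (ball z (c * ρ)) μ := by
  simpa only [measureReal_ball_mul_div μ x z hc hρ] using
    abs_setAverage_sub_setAverage_le hsub (measure_ball_pos μ x hρ).ne' measure_ball_lt_top.ne hf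

end AddHaar

theorem LocallyIntegrableOn.integrableOn_ball_of_lt {X : Type*} [PseudoMetricSpace X]
    [ProperSpace X] [MeasurableSpace X] {μ : Measure X} [IsLocallyFiniteMeasure μ] {f : X → ℝ}
    {Ω : Set X} (hf : LocallyIntegrableOn f Ω μ) {x : X} {ρ R : ℝ} (hΩ : ball x R ⊆ Ω)
    (hρR : ρ < R) : IntegrableOn f (ball x ρ) μ :=
  (hf.integrableOn_compact_subset ((closedBall_subset_ball hρR).trans hΩ)
    (isCompact_closedBall x ρ)).mono_set ball_subset_closedBall

namespace IsLebesguePoint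

variable {n : ℕ} {f : EuclideanSpace ℝ (Fin n) → ℝ} {x : EuclideanSpace ℝ (Fin n)}

theorem tendsto_setAverage_ball (hx : IsLebesguePoint f x) {ρ₀ : ℝ} (hρ₀ : 0 < ρ₀)
    (hf : IntegrableOn f (ball x ρ₀)) :
    Tendsto (fun r => ⨍ y in ball x r, f y) (𝓝[>] 0) (𝓝 (f x)) := by
  rw [tendsto_iff_dist_tendsto_zero]
  refine squeeze_zero' (Eventually.of_forall fun _ => dist_nonneg) ?_ hx
  filter_upwards [Ioo_mem_nhdsGT hρ₀] with r hr
  exact abs_setAverage_sub_le (measure_ball_pos volume x hr.1).ne' measure_ball_lt_top.ne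
    (hf.mono_set (ball_subset_ball hr.2.le)) (f x)

theorem abs_sub_setAverage_ball_le (hx : IsLebesguePoint f x) {ρ₀ K : ℝ} (hρ₀ : 0 < ρ₀)
    (hf : IntegrableOn f (ball x ρ₀))
    (hosc : ∀ ρ, 0 < ρ → ρ ≤ ρ₀ → meanOscillation f (ball x ρ) ≤ K * ρ) :
    |f x - ⨍ y in ball x ρ₀, f y| ≤ 2 ^ (n + 1) * K * ρ₀ := by
  set ρ : ℕ → ℝ := fun i => ρ₀ / 2 ^ i with hρ_def
  have hρ : ∀ i, 0 < ρ i := fun i => by positivity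
  have hρ_le : ∀ i, ρ i ≤ ρ₀ := fun i => div_le_self hρ₀.le (one_le_pow₀ one_le_two)
  have hρ_succ : ∀ i, ρ i = 2 * ρ (i + 1) := fun i => by
    simp only [hρ_def, pow_succ]
    field_simp
  have hstep : ∀ i, dist (⨍ y in ball x (ρ i), f y) (⨍ y in ball x (ρ (i + 1)), f y) ≤
      2 ^ (n + 1) * K * ρ₀ / 2 / 2 ^ i := by
    intro i
    have h := abs_setAverage_ball_sub_le volume two_pos (hρ (i + 1))
      (ball_subset_ball (by linarith [hρ (i + 1)]))
      (hρ_succ i ▸ hf.mono_set (ball_subset_ball (hρ_le i)))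
    rw [← hρ_succ i, finrank_euclideanSpace_fin] at h
    rw [dist_comm, Real.dist_eq]
    refine h.trans ?_
    calc _ ≤ 2 ^ n * (K * ρ i) := by gcongr; exact hosc _ (hρ i) (hρ_le i)
      _ = 2 ^ (n + 1) * K * ρ₀ / 2 / 2 ^ i := by simp only [hρ_def]; ring
  have hρ_lim : Tendsto ρ atTop (𝓝[>] 0) :=
    tendsto_nhdsWithin_iff.2 ⟨tendsto_const_nhds.div_atTop
      (tendsto_pow_atTop_atTop_of_one_lt one_lt_two), Eventually.of_forall hρ⟩
  simpa [hρ_def, Real.dist_eq, abs_sub_comm] using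
    dist_le_of_le_geometric_two_of_tendsto₀ hstep ((hx.tendsto_setAverage_ball hρ₀ hf).comp hρ_lim)

end IsLebesguePoint

section Euclidean

variable {n : ℕ} {f : EuclideanSpace ℝ (Fin n) → ℝ} {x y : EuclideanSpace ℝ (Fin n)}

theorem abs_sub_le_of_meanOscillation_le {Kx Ky : ℝ} (hx : IsLebesguePoint f x)
    (hy : IsLebesguePoint f y) (hxy : x ≠ y) (hKx : 0 ≤ Kx) (hKy : 0 ≤ Ky)
    (hf : IntegrableOn f (ball y (3 * (dist x y / 2))))
    (hoscx : ∀ ρ, 0 < ρ → ρ ≤ dist x y / 2 → meanOscillation f (ball x ρ) ≤ Kx * ρ)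
    (hoscy : ∀ ρ, 0 < ρ → ρ ≤ 3 * (dist x y / 2) → meanOscillation f (ball y ρ) ≤ Ky * ρ) :
    |f x - f y| ≤ 5 * 3 ^ n * (Kx + Ky) * dist x y := by
  set r := dist x y / 2 with hr_def
  have hr : 0 < r := half_pos (dist_pos.2 hxy)
  have hsub : ball x r ⊆ ball y (3 * r) := ball_subset_ball' (by linarith)
  have hx' := hx.abs_sub_setAverage_ball_le hr (hf.mono_set hsub) hoscx
  have hy' := hy.abs_sub_setAverage_ball_le (by positivity) hf hoscy
  have hxy' := abs_setAverage_ball_sub_le volume three_pos hr hsub hf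
  rw [finrank_euclideanSpace_fin] at hxy'
  have h23 : (2 : ℝ) ^ n ≤ 3 ^ n := pow_le_pow_left₀ zero_le_two (by norm_num) n
  have htri : |f x - f y| ≤ |f x - ⨍ z in ball x r, f z| +
      |(⨍ z in ball x r, f z) - ⨍ z in ball y (3 * r), f z| +
      |f y - ⨍ z in ball y (3 * r), f z| := by
    linarith [abs_sub_le (f x) (⨍ z in ball x r, f z) (f y),
      abs_sub_le (⨍ z in ball x r, f z) (⨍ z in ball y (3 * r), f z) (f y),
      abs_sub_comm (⨍ z in ball y (3 * r), f z) (f y)]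
  calc |f x - f y| ≤ 2 ^ (n + 1) * Kx * r + 3 ^ n * (Ky * (3 * r)) +
        2 ^ (n + 1) * Ky * (3 * r) := by
        refine htri.trans (add_le_add (add_le_add hx' (hxy'.trans ?_)) hy')
        gcongr
        exact hoscy _ (by positivity) le_rfl
    _ ≤ 5 * 3 ^ n * (Kx + Ky) * dist x y := by
        rw [pow_succ, show dist x y = 2 * r by rw [hr_def]; ring]
        linarith [mul_le_mul_of_nonneg_right h23 (mul_nonneg hKx hr.le),
          mul_le_mul_of_nonneg_right h23 (mul_nonneg hKy hr.le),
          mul_nonneg (pow_nonneg zero_le_three n) (mul_nonneg hKx hr.le),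
          mul_nonneg (pow_nonneg zero_le_three n) (mul_nonneg hKy hr.le)]

theorem laverage_ball_le_restMaximal {Ω : Set (EuclideanSpace ℝ (Fin n))}
    {g : EuclideanSpace ℝ (Fin n) → ℝ≥0∞} {R ρ : ℝ} (hρ : 0 < ρ) (hρR : ρ < R)
    (hΩ : ball x ρ ⊆ Ω) :
    ⨍⁻ z in ball x ρ, g z ∂volume ≤ restMaximal Ω g R x :=
  le_iSup_of_le ρ <| le_iSup_of_le hρ <| le_iSup_of_le hρR <| le_iSup_of_le hΩ le_rfl

theorem meanOscillation_ball_le_of_restMaximal {Ω : Set (EuclideanSpace ℝ (Fin n))}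
    {g : EuclideanSpace ℝ (Fin n) → ℝ≥0∞} {p C₀ R ρ : ℝ} (hp : 0 ≤ p) (hC₀ : 0 ≤ C₀)
    (hpoin : ∀ z r, 0 < r → ball z r ⊆ Ω → ENNReal.ofReal (meanOscillation f (ball z r)) ≤
      ENNReal.ofReal (C₀ * r) * (⨍⁻ y in ball z r, g y ∂volume) ^ (1 / p))
    (hΩ : ball x R ⊆ Ω) (hM : restMaximal Ω g R x ^ (1 / p) ≠ ∞) (hρ : 0 < ρ) (hρR : ρ < R) :
    meanOscillation f (ball x ρ) ≤ C₀ * (restMaximal Ω g R x ^ (1 / p)).toReal * ρ := by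
  have hsub : ball x ρ ⊆ Ω := (ball_subset_ball hρR.le).trans hΩ
  have h := (hpoin x ρ hρ hsub).trans <| mul_le_mul_right
    (ENNReal.rpow_le_rpow (laverage_ball_le_restMaximal hρ hρR hsub) (by positivity)) _
  rw [ENNReal.ofReal_le_iff_le_toReal (ENNReal.mul_ne_top ENNReal.ofReal_ne_top hM),
    ENNReal.toReal_mul, ENNReal.toReal_ofReal (by positivity)] at h
  linarith

end Euclidean

theorem ofReal_le_ofReal_mul_add {a c : ℝ} {u v : ℝ≥0∞} (hc : 0 < c)
    (h : u ≠ ∞ → v ≠ ∞ → a ≤ c * (u.toReal + v.toReal)) :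
    ENNReal.ofReal a ≤ ENNReal.ofReal c * (u + v) := by
  have hc' : ENNReal.ofReal c ≠ 0 := (ENNReal.ofReal_pos.2 hc).ne'
  rcases eq_or_ne u ∞ with rfl | hu
  · simp [ENNReal.mul_top hc']
  rcases eq_or_ne v ∞ with rfl | hv
  · simp [ENNReal.mul_top hc']
  rw [← ENNReal.toReal_add hu hv] at h
  calc ENNReal.ofReal a ≤ ENNReal.ofReal (c * (u + v).toReal) := ENNReal.ofReal_le_ofReal (h hu hv)
    _ = ENNReal.ofReal c * (u + v) := by
      rw [ENNReal.ofReal_mul hc.le, ENNReal.ofReal_toReal (ENNReal.add_ne_top.2 ⟨hu, hv⟩)]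

theorem telescoping_pointwise_estimate_general (n : ℕ) (p C₀ : ℝ)
    (hp : 1 ≤ p) (hC₀ : 0 < C₀) :
    ∃ C : ℝ, 0 < C ∧
      ∀ Ω : Set (EuclideanSpace ℝ (Fin n)), IsOpen Ω →
      ∀ f : EuclideanSpace ℝ (Fin n) → ℝ, LocallyIntegrableOn f Ω →
      ∀ g : EuclideanSpace ℝ (Fin n) → ℝ≥0∞, Measurable g →
        (∀ (z : EuclideanSpace ℝ (Fin n)) (ρ : ℝ), 0 < ρ → ball z ρ ⊆ Ω →
          ENNReal.ofReal (⨍ x in ball z ρ, |f x - ⨍ y in ball z ρ, f y|) ≤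
            ENNReal.ofReal (C₀ * ρ) * (⨍⁻ y in ball z ρ, g y ∂volume) ^ (1 / p)) →
        ∀ x y : EuclideanSpace ℝ (Fin n),
          IsLebesguePoint f x → IsLebesguePoint f y →
          ball x (2 * dist x y) ⊆ Ω → ball y (2 * dist x y) ⊆ Ω →
          ENNReal.ofReal |f x - f y| ≤
            ENNReal.ofReal (C * dist x y) *
              ((restMaximal Ω g (2 * dist x y) x) ^ (1 / p) +
                (restMaximal Ω g (2 * dist x y) y) ^ (1 / p)) := by
  refine ⟨5 * 3 ^ n * C₀, by positivity, ?_⟩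
  intro Ω _ f hf g _ hpoin x y hx hy hBx hBy
  obtain rfl | hxy := eq_or_ne x y
  · simp
  have hr : 0 < dist x y := dist_pos.2 hxy
  refine ofReal_le_ofReal_mul_add (by positivity) fun hMx hMy => ?_
  have hosc : ∀ z, ball z (2 * dist x y) ⊆ Ω → restMaximal Ω g (2 * dist x y) z ^ (1 / p) ≠ ∞ →
      ∀ ρ, 0 < ρ → ρ ≤ 3 * (dist x y / 2) → meanOscillation f (ball z ρ) ≤
        C₀ * (restMaximal Ω g (2 * dist x y) z ^ (1 / p)).toReal * ρ :=
    fun z hBz hMz ρ hρ hρr =>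
      meanOscillation_ball_le_of_restMaximal (by linarith) hC₀.le hpoin hBz hMz hρ (by linarith)
  calc |f x - f y| ≤ 5 * 3 ^ n * (C₀ * (restMaximal Ω g (2 * dist x y) x ^ (1 / p)).toReal +
        C₀ * (restMaximal Ω g (2 * dist x y) y ^ (1 / p)).toReal) * dist x y :=
      abs_sub_le_of_meanOscillation_le hx hy hxy (by positivity) (by positivity)
        (LocallyIntegrableOn.integrableOn_ball_of_lt hf hBy (by linarith))
        (fun ρ hρ hρr => hosc x hBx hMx ρ hρ (by linarith)) (hosc y hBy hMy)
    _ = _ := by ring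

/-- **Telescoping pointwise estimate.** If `f ∈ L¹_loc(Ω)` satisfies the `(1,p)`-Poincaré-type
inequality `⨍_B |f - f_B| ≤ C₀ ρ (⨍_B g)^{1/p}` on all balls `B = B(z,ρ) ⊆ Ω`, then there is
`C = C(n,p,C₀)` with
`|f(x) - f(y)| ≤ C |x-y| ((M_{2|x-y|}g(x))^{1/p} + (M_{2|x-y|}g(y))^{1/p})`
at all Lebesgue points `x, y` of `f` with `B(x,2|x-y|), B(y,2|x-y|) ⊆ Ω`. -/
theorem telescoping_pointwise_estimate (n : ℕ) (hn : 1 ≤ n) (p C₀ : ℝ)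
    (hp : 1 ≤ p) (hC₀ : 0 < C₀) :
    ∃ C : ℝ, 0 < C ∧
      ∀ Ω : Set (EuclideanSpace ℝ (Fin n)), IsOpen Ω →
      ∀ f : EuclideanSpace ℝ (Fin n) → ℝ, LocallyIntegrableOn f Ω →
      ∀ g : EuclideanSpace ℝ (Fin n) → ℝ≥0∞, Measurable g →
        (∀ (z : EuclideanSpace ℝ (Fin n)) (ρ : ℝ), 0 < ρ → ball z ρ ⊆ Ω →
          ENNReal.ofReal (⨍ x in ball z ρ, |f x - ⨍ y in ball z ρ, f y|) ≤
            ENNReal.ofReal (C₀ * ρ) * (⨍⁻ y in ball z ρ, g y ∂volume) ^ (1 / p)) →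
        ∀ x y : EuclideanSpace ℝ (Fin n),
          IsLebesguePoint f x → IsLebesguePoint f y →
          ball x (2 * dist x y) ⊆ Ω → ball y (2 * dist x y) ⊆ Ω →
          ENNReal.ofReal |f x - f y| ≤
            ENNReal.ofReal (C * dist x y) *
              ((restMaximal Ω g (2 * dist x y) x) ^ (1 / p) +
                (restMaximal Ω g (2 * dist x y) y) ^ (1 / p)) :=
  telescoping_pointwise_estimate_general n p C₀ hp hC₀
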